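/- Let H be a connected hypergraph of order n ≥ 2 with signless Laplacian Q(H). Then q_min(H) ≤ 2·sqrt(Z₁(H)/n), where Z₁(H) = Σ_{i∈V} d_i² is the first Zagreb index. -/

import Mathlib

open Finset

/-- The set of hyperedges containing both `i` and `j`. -/
def edgesBetween {n : ℕ} (E : Finset (Finset (Fin n))) (i j : Fin n) :
    Finset (Finset (Fin n)) :=
  E.filter fun e => i ∈ e ∧ j ∈ e

/-- The degree of vertex `i`: the number of hyperedges containing `i`. -/
def hdeg {n : ℕ} (E : Finset (Finset (Fin n))) (i : Fin n) : ℕ :=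
  (E.filter fun e => i ∈ e).card

/-- Two (distinct) vertices are adjacent if some hyperedge contains both. -/
def Adj {n : ℕ} (E : Finset (Finset (Fin n))) (i j : Fin n) : Prop :=
  i ≠ j ∧ ∃ e ∈ E, i ∈ e ∧ j ∈ e

/-- The neighbours of a vertex. -/
noncomputable def neighbors {n : ℕ} (E : Finset (Finset (Fin n))) (i : Fin n) :
    Finset (Fin n) :=
  @Finset.filter _ (fun j => Adj E i j) (Classical.decPred _) Finset.univ

/-- Banerjee's adjacency matrix of a hypergraph: `A i j = ∑_{e ∋ i,j} 1/(|e|-1)`. -/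
noncomputable def adjMat {n : ℕ} (E : Finset (Finset (Fin n))) :
    Matrix (Fin n) (Fin n) ℝ :=
  Matrix.of fun i j =>
    if i = j then 0 else ∑ e ∈ edgesBetween E i j, 1 / ((e.card : ℝ) - 1)

/-- The signless Laplacian matrix `Q = D + A`. -/
noncomputable def signlessLap {n : ℕ} (E : Finset (Finset (Fin n))) :
    Matrix (Fin n) (Fin n) ℝ :=
  Matrix.diagonal (fun i => (hdeg E i : ℝ)) + adjMat E

/-- Largest eigenvalue of a real matrix. -/
noncomputable def qmax {n : ℕ} (M : Matrix (Fin n) (Fin n) ℝ) : ℝ :=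
  sSup (spectrum ℝ M)

/-- Smallest eigenvalue of a real matrix. -/
noncomputable def qmin {n : ℕ} (M : Matrix (Fin n) (Fin n) ℝ) : ℝ :=
  sInf (spectrum ℝ M)

/-- A hypergraph is `k`-uniform if every hyperedge has exactly `k` vertices. -/
def IsUniform {n : ℕ} (k : ℕ) (E : Finset (Finset (Fin n))) : Prop :=
  ∀ e ∈ E, e.card = k

/-- A hypergraph is connected if any two vertices are joined by a walk. -/
def Conn {n : ℕ} (E : Finset (Finset (Fin n))) : Prop :=
  ∀ i j : Fin n, Relation.ReflTransGen (Adj E) i j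

/-!
The smallest eigenvalue of the symmetric matrix `Q` is at most the mean eigenvalue `tr Q / n`.
Since `A` has zero diagonal, `tr Q` is the degree sum, so this mean is the mean degree, which by
Cauchy–Schwarz is at most the quadratic mean `√(Z₁ / n)`.
-/

theorem Finset.sum_div_card_le_sqrt_sum_sq_div_card {ι : Type*} (s : Finset ι) (f : ι → ℝ) :
    (∑ i ∈ s, f i) / #s ≤ √((∑ i ∈ s, f i ^ 2) / #s) := by
  refine (le_abs_self _).trans (Real.abs_le_sqrt ?_)
  calc ((∑ i ∈ s, f i) / #s) ^ 2 = (∑ i ∈ s, f i) ^ 2 / (#s * #s) := by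
        rw [div_pow, sq (#s : ℝ)]
    _ ≤ #s * (∑ i ∈ s, f i ^ 2) / (#s * #s) := by
      gcongr
      exact sq_sum_le_card_mul_sum_sq
    _ ≤ (∑ i ∈ s, f i ^ 2) / #s := mul_div_mul_left_le (by positivity)

theorem qmin_le_trace_div {n : ℕ} {M : Matrix (Fin n) (Fin n) ℝ} (hM : M.IsHermitian) :
    qmin M ≤ M.trace / n := by
  rw [qmin, hM.spectrum_real_eq_range_eigenvalues, hM.trace_eq_sum_eigenvalues]
  rcases Nat.eq_zero_or_pos n with rfl | hn
  · simp -- the spectrum is empty and `sInf ∅ = 0 = 0 / 0`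
  obtain ⟨i, -, hi⟩ : ∃ i ∈ univ, hM.eigenvalues i ≤ (∑ j, hM.eigenvalues j) / n := by
    refine exists_le_of_sum_le (univ_nonempty_iff.mpr ⟨⟨0, hn⟩⟩) ?_
    rw [sum_const, card_univ, Fintype.card_fin, nsmul_eq_mul, mul_div_cancel₀ _ (by positivity)]
  exact (csInf_le (Set.finite_range _).bddBelow (Set.mem_range_self i)).trans hi

theorem edgesBetween_comm {n : ℕ} (E : Finset (Finset (Fin n))) (i j : Fin n) :
    edgesBetween E i j = edgesBetween E j i := by
  simp only [edgesBetween, and_comm]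

theorem adjMat_isHermitian {n : ℕ} (E : Finset (Finset (Fin n))) : (adjMat E).IsHermitian := by
  ext i j
  simp [adjMat, eq_comm, edgesBetween_comm E i j]

theorem signlessLap_isHermitian {n : ℕ} (E : Finset (Finset (Fin n))) :
    (signlessLap E).IsHermitian :=
  (Matrix.isHermitian_diagonal _).add (adjMat_isHermitian E)

theorem trace_signlessLap {n : ℕ} (E : Finset (Finset (Fin n))) :
    (signlessLap E).trace = ∑ i, (hdeg E i : ℝ) := by
  simp [signlessLap, adjMat, Matrix.trace]

theorem stmt_12_general (n : ℕ) (E : Finset (Finset (Fin n))) :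
    qmin (signlessLap E) ≤
      2 * Real.sqrt ((∑ i : Fin n, (hdeg E i : ℝ) ^ 2) / n) := by
  calc qmin (signlessLap E) ≤ (signlessLap E).trace / n :=
        qmin_le_trace_div (signlessLap_isHermitian E)
    _ = (∑ i, (hdeg E i : ℝ)) / n := by rw [trace_signlessLap]
    _ ≤ √((∑ i, (hdeg E i : ℝ) ^ 2) / n) := by
        simpa using sum_div_card_le_sqrt_sum_sq_div_card univ fun i ↦ (hdeg E i : ℝ)
    _ ≤ 2 * √((∑ i, (hdeg E i : ℝ) ^ 2) / n) :=
        le_mul_of_one_le_left (Real.sqrt_nonneg _) one_le_two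

theorem stmt_12 (n : ℕ) (hn : 2 ≤ n) (E : Finset (Finset (Fin n)))
    (hc : Conn E) :
    qmin (signlessLap E) ≤
      2 * Real.sqrt ((∑ i : Fin n, (hdeg E i : ℝ) ^ 2) / n) :=
  stmt_12_general n E
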